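/- Suppose 0 < P(R = 1 | X, D) < 1 almost surely, let π_R(X, D) := P(R = 1 | X, D) / P(R = 0 | X, D) and m_C(η, X, D) := P(V_C < η | X, D, R = 1) be the true nuisance functions, and let m̂ : ℝ × ℝ^k × {0,1} → [0,1] be measurable and π̂ : ℝ^k × {0,1} → ℝ be measurable and bounded below by a positive constant, with the relevant random variables square-integrable. Then: sup over η ∈ ℝ of | E[ψ_C(η; m̂, π̂)] − E[ψ_C(η; m_C, π_R)] | ≤ ‖ 1/π̂(X, D) − 1/π_R(X, D) ‖_{L²(P)} · sup over η ∈ ℝ of ‖ m_C(η, X, D) − m̂(η, X, D) ‖_{L²(P)}. -/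

import Mathlib

open MeasureTheory ProbabilityTheory
open scoped ENNReal

/-! Conditioning on `σ(X, D)` turns the two nuisance functions into conditional expectations:
`E[R h] = E[e h]` with `e = P(R = 1 | X, D)`, and `E[R h (1{V < η} - m_C)] = 0`, for every
`σ(X, D)`-measurable `h`. Subtracting the two influence functions and applying these identities
collapses the difference of their means to `E[e (1/π̂ - 1/π_R) (m_C - m̂)]`, since
`e · (1/π_R) = 1 - e`. This is a product of the two nuisance errors, so Cauchy–Schwarz and
`0 < e < 1` bound it for each `η` by the product of their `L²` norms. -/

section
variable {Ω : Type*} {m mΩ : MeasurableSpace Ω} {μ : Measure Ω}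

lemma abs_integral_mul_le_eLpNorm_mul_eLpNorm {f g : Ω → ℝ}
    (hf : MemLp f 2 μ) (hg : MemLp g 2 μ) :
    |∫ ω, f ω * g ω ∂μ| ≤ (eLpNorm f 2 μ).toReal * (eLpNorm g 2 μ).toReal := by
  have h_inner : ∫ ω, f ω * g ω ∂μ = inner ℝ (hf.toLp f) (hg.toLp g) := by
    rw [L2.inner_def]
    refine integral_congr_ae ?_
    filter_upwards [hf.coeFn_toLp, hg.coeFn_toLp] with ω hfω hgω
    simp [hfω, hgω, mul_comm]
  rw [h_inner, ← Lp.norm_toLp f hf, ← Lp.norm_toLp g hg]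
  exact abs_real_inner_le_norm _ _

lemma integral_mul_eq_setIntegral {R : Ω → ℝ} (hRbin : ∀ ω, R ω = 0 ∨ R ω = 1)
    (hR : Measurable R) (g : Ω → ℝ) :
    ∫ ω, R ω * g ω ∂μ = ∫ ω in {ω | R ω = 1}, g ω ∂μ := by
  have hA : MeasurableSet {ω | R ω = 1} := hR (measurableSet_singleton 1)
  rw [← integral_indicator hA]
  congr 1 with ω
  rcases hRbin ω with h | h <;> simp [h]

lemma memLp_top_of_eq_zero_or_eq_one {R : Ω → ℝ} (hRbin : ∀ ω, R ω = 0 ∨ R ω = 1)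
    (hR : Measurable R) : MemLp R ∞ μ :=
  memLp_top_of_bound hR.aestronglyMeasurable 1
    (ae_of_all _ fun ω => by rcases hRbin ω with h | h <;> simp [h])

lemma memLp_top_of_mem_Icc {f : Ω → ℝ} (hf : AEStronglyMeasurable f μ)
    (h01 : ∀ ω, f ω ∈ Set.Icc (0 : ℝ) 1) : MemLp f ∞ μ :=
  memLp_top_of_bound hf 1 (ae_of_all _ fun ω => by
    rw [Real.norm_eq_abs, abs_le]
    exact ⟨by linarith [(h01 ω).1], (h01 ω).2⟩)

lemma memLp_top_one_div_of_le {f : Ω → ℝ} (hf : Measurable f) {c : ℝ} (hc : 0 < c)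
    (hcf : ∀ ω, c ≤ f ω) : MemLp (fun ω => 1 / f ω) ∞ μ :=
  memLp_top_of_bound (hf.const_div 1).aestronglyMeasurable (1 / c) (ae_of_all _ fun ω => by
    rw [Real.norm_of_nonneg (one_div_nonneg.2 (hc.le.trans (hcf ω)))]
    exact one_div_le_one_div_of_le hc (hcf ω))

lemma toReal_eLpNorm_le_of_norm_le [IsProbabilityMeasure μ] {f : Ω → ℝ} {C : ℝ} (hC : 0 ≤ C)
    (p : ℝ≥0∞) (hf : ∀ ω, ‖f ω‖ ≤ C) : (eLpNorm f p μ).toReal ≤ C :=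
  ENNReal.toReal_le_of_le_ofReal hC
    (by simpa using eLpNorm_le_of_ae_bound (p := p) (ae_of_all μ hf))

lemma integral_mul_condExp_of_stronglyMeasurable (hm : m ≤ mΩ) [SigmaFinite (μ.trim hm)]
    {h f : Ω → ℝ} (hh : StronglyMeasurable[m] h) (hhf : Integrable (h * f) μ)
    (hf : Integrable f μ) :
    ∫ ω, h ω * f ω ∂μ = ∫ ω, h ω * μ[f | m] ω ∂μ :=
  calc ∫ ω, h ω * f ω ∂μ = ∫ ω, μ[h * f | m] ω ∂μ := (integral_condExp hm).symm
    _ = ∫ ω, h ω * μ[f | m] ω ∂μ :=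
      integral_congr_ae (condExp_mul_of_stronglyMeasurable_left hh hhf hf)

lemma setIntegral_mul_eq_of_ae_eq_condExp_cond (hm : m ≤ mΩ) [IsFiniteMeasure μ]
    {A : Set Ω} {h f M : Ω → ℝ} (hh : StronglyMeasurable[m] h) (hhf : Integrable (h * f) μ)
    (hf : Integrable f μ) (hM : M =ᵐ[μ[|A]] (μ[|A])[f | m]) :
    ∫ ω in A, h ω * f ω ∂μ = ∫ ω in A, h ω * M ω ∂μ := by
  rcases eq_or_ne (μ A) 0 with hA | hA
  · simp [Measure.restrict_eq_zero.mpr hA]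
  have h_restrict : μ.restrict A = μ A • μ[|A] := by
    rw [ProbabilityTheory.cond, smul_smul, ENNReal.mul_inv_cancel hA (measure_ne_top μ A),
      one_smul]
  have h_int : ∀ {g : Ω → ℝ}, Integrable g μ → Integrable g μ[|A] := fun hg =>
    hg.restrict.smul_measure (ENNReal.inv_ne_top.mpr hA)
  rw [h_restrict, integral_smul_measure, integral_smul_measure,
    integral_mul_condExp_of_stronglyMeasurable hm hh (h_int hhf) (h_int hf)]
  congr 1
  refine integral_congr_ae ?_
  filter_upwards [hM] with ω hω
  rw [hω]

lemma integral_binary_mul_eq_condExp (hm : m ≤ mΩ) [IsFiniteMeasure μ] {R e h : Ω → ℝ}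
    (hRbin : ∀ ω, R ω = 0 ∨ R ω = 1) (hR : Measurable R)
    (he : e =ᵐ[μ] μ[{ω | R ω = 1}.indicator 1 | m])
    (hh : StronglyMeasurable[m] h) (hhi : Integrable h μ) :
    ∫ ω, R ω * h ω ∂μ = ∫ ω, e ω * h ω ∂μ := by
  have hA : MeasurableSet {ω | R ω = 1} := hR (measurableSet_singleton 1)
  calc ∫ ω, R ω * h ω ∂μ = ∫ ω, h ω * {ω | R ω = 1}.indicator 1 ω ∂μ := by
        congr 1 with ω
        rcases hRbin ω with hω | hω <;> simp [hω]
    _ = ∫ ω, h ω * μ[{ω | R ω = 1}.indicator 1 | m] ω ∂μ :=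
        integral_mul_condExp_of_stronglyMeasurable hm hh
          (hhi.mul_of_top_left ((memLp_top_const 1).indicator hA))
          ((integrable_const 1).indicator hA)
    _ = ∫ ω, e ω * h ω ∂μ := by
        refine integral_congr_ae ?_
        filter_upwards [he] with ω hω
        rw [hω, mul_comm]

lemma integral_mul_binary_mul_sub_eq_zero (hm : m ≤ mΩ) [IsFiniteMeasure μ]
    {R Z M w : Ω → ℝ} (hRbin : ∀ ω, R ω = 0 ∨ R ω = 1) (hR : Measurable R)
    (hZ : MemLp Z ∞ μ) (hM_mem : MemLp M ∞ μ)
    (hM : M =ᵐ[μ[|{ω | R ω = 1}]] (μ[|{ω | R ω = 1}])[Z | m])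
    (hw_meas : StronglyMeasurable[m] w) (hw : Integrable w μ) :
    ∫ ω, w ω * (R ω * (Z ω - M ω)) ∂μ = 0 := by
  have hwZ : Integrable (fun ω => w ω * Z ω) μ := hw.mul_of_top_left hZ
  have hwM : Integrable (fun ω => w ω * M ω) μ := hw.mul_of_top_left hM_mem
  calc ∫ ω, w ω * (R ω * (Z ω - M ω)) ∂μ
      = ∫ ω, R ω * (w ω * Z ω - w ω * M ω) ∂μ := by congr 1 with ω; ring
    _ = ∫ ω in {ω | R ω = 1}, (w ω * Z ω - w ω * M ω) ∂μ :=
      integral_mul_eq_setIntegral hRbin hR _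
    _ = 0 := by
      rw [integral_sub hwZ.integrableOn hwM.integrableOn, sub_eq_zero]
      exact setIntegral_mul_eq_of_ae_eq_condExp_cond hm hw_meas hwZ (hZ.integrable le_top) hM

-- `ψ_C(η; m, π)`, with the outcome `1{V_C < η}` abstracted to `Z` and the nuisances evaluated
-- along `(X, D)`.
noncomputable def efficientInfluence (γ : ℝ) (R Z M π : Ω → ℝ) (ω : Ω) : ℝ :=
  (1 - R ω) * (M ω - (1 - γ)) + R ω / π ω * (Z ω - M ω)

lemma memLp_top_efficientInfluence (γ : ℝ) {R Z M π : Ω → ℝ} (hR : MemLp R ∞ μ)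
    (hZ : MemLp Z ∞ μ) (hM : MemLp M ∞ μ) (hπ : MemLp (fun ω => 1 / π ω) ∞ μ) :
    MemLp (efficientInfluence γ R Z M π) ∞ μ := by
  have h := ((hM.sub (memLp_top_const (1 - γ))).mul' (r := ∞) ((memLp_top_const 1).sub hR)).add
    ((hZ.sub hM).mul' (r := ∞) (hπ.mul' (r := ∞) hR))
  refine h.ae_eq (ae_of_all _ fun ω => ?_)
  simp only [efficientInfluence, Pi.add_apply, Pi.sub_apply]
  ring

lemma efficientInfluence_sub_efficientInfluence (γ : ℝ) (R Z M M' π π' : Ω → ℝ) (ω : Ω) :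
    efficientInfluence γ R Z M' π ω - efficientInfluence γ R Z M π' ω
      = (R ω * ((1 / π ω + 1) * (M ω - M' ω)) - (M ω - M' ω))
        + (1 / π ω - 1 / π' ω) * (R ω * (Z ω - M ω)) := by
  simp only [efficientInfluence]
  ring

theorem integral_efficientInfluence_sub_eq_of_ae_eq_condExp_cond (hm : m ≤ mΩ)
    [IsFiniteMeasure μ] (γ : ℝ) {R Z π π' M M' : Ω → ℝ} (hRbin : ∀ ω, R ω = 0 ∨ R ω = 1)
    (hR : Measurable R) (hZ : MemLp Z ∞ μ)
    (hM : M =ᵐ[μ[|{ω | R ω = 1}]] (μ[|{ω | R ω = 1}])[Z | m])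
    (hM_mem : MemLp M ∞ μ) (hM'_mem : MemLp M' ∞ μ) (hπ_mem : MemLp (fun ω => 1 / π ω) ∞ μ)
    (hw_meas : Measurable[m] fun ω => 1 / π ω - 1 / π' ω)
    (hw : Integrable (fun ω => 1 / π ω - 1 / π' ω) μ) :
    ∫ ω, efficientInfluence γ R Z M' π ω ∂μ - ∫ ω, efficientInfluence γ R Z M π' ω ∂μ
      = ∫ ω, (R ω * ((1 / π ω + 1) * (M ω - M' ω)) - (M ω - M' ω)) ∂μ := by
  have hR_mem := memLp_top_of_eq_zero_or_eq_one (μ := μ) hRbin hR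
  have h_decomp := efficientInfluence_sub_efficientInfluence γ R Z M M' π π'
  have h_first : Integrable (fun ω => R ω * ((1 / π ω + 1) * (M ω - M' ω)) - (M ω - M' ω)) μ :=
    ((((hM_mem.sub hM'_mem).mul' (r := ∞) (hπ_mem.add (memLp_top_const 1))).mul' (r := ∞)
      hR_mem).sub (hM_mem.sub hM'_mem)).integrable le_top
  have h_second : Integrable (fun ω => (1 / π ω - 1 / π' ω) * (R ω * (Z ω - M ω))) μ :=
    hw.mul_of_top_left ((hZ.sub hM_mem).mul' (r := ∞) hR_mem)
  have h_inf' : Integrable (efficientInfluence γ R Z M' π) μ :=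
    (memLp_top_efficientInfluence γ hR_mem hZ hM'_mem hπ_mem).integrable le_top
  have h_inf : Integrable (efficientInfluence γ R Z M π') μ :=
    (h_inf'.sub (h_first.add h_second)).congr
      (ae_of_all _ fun ω => by simp only [Pi.sub_apply, Pi.add_apply]; linarith [h_decomp ω])
  rw [← integral_sub h_inf' h_inf, ← add_zero (∫ ω, (R ω * _ - _) ∂μ),
    ← integral_mul_binary_mul_sub_eq_zero hm hRbin hR hZ hM_mem hM hw_meas.stronglyMeasurable hw,
    ← integral_add h_first h_second]
  exact integral_congr_ae (ae_of_all _ h_decomp)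

theorem integral_efficientInfluence_sub (hm : m ≤ mΩ) [IsFiniteMeasure μ] (γ : ℝ)
    {R Z e π M M' : Ω → ℝ} (hRbin : ∀ ω, R ω = 0 ∨ R ω = 1) (hR : Measurable R)
    (he_meas : Measurable[m] e) (he : e =ᵐ[μ] μ[{ω | R ω = 1}.indicator 1 | m])
    (he_mem : ∀ᵐ ω ∂μ, 0 < e ω ∧ e ω < 1)
    (hZ : MemLp Z ∞ μ) (hM : M =ᵐ[μ[|{ω | R ω = 1}]] (μ[|{ω | R ω = 1}])[Z | m])
    (hM_meas : Measurable[m] M) (hM_mem : MemLp M ∞ μ)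
    (hM'_meas : Measurable[m] M') (hM'_mem : MemLp M' ∞ μ)
    (hπ_meas : Measurable[m] (fun ω => 1 / π ω)) (hπ_mem : MemLp (fun ω => 1 / π ω) ∞ μ)
    (hw : Integrable (fun ω => 1 / π ω - 1 / (e ω / (1 - e ω))) μ) :
    ∫ ω, efficientInfluence γ R Z M' π ω ∂μ
        - ∫ ω, efficientInfluence γ R Z M (fun ω => e ω / (1 - e ω)) ω ∂μ
      = ∫ ω, e ω * (1 / π ω - 1 / (e ω / (1 - e ω))) * (M ω - M' ω) ∂μ := by
  have hw_meas : Measurable[m] fun ω => 1 / π ω - 1 / (e ω / (1 - e ω)) :=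
    hπ_meas.sub (measurable_const.div (he_meas.div (measurable_const.sub he_meas)))
  rw [integral_efficientInfluence_sub_eq_of_ae_eq_condExp_cond hm γ hRbin hR hZ hM hM_mem hM'_mem
    hπ_mem hw_meas hw]
  set h := fun ω => (1 / π ω + 1) * (M ω - M' ω)
  have h_meas : Measurable[m] h := (hπ_meas.add measurable_const).mul (hM_meas.sub hM'_meas)
  have h_mem : MemLp h ∞ μ :=
    (hM_mem.sub hM'_mem).mul' (r := ∞) (hπ_mem.add (memLp_top_const 1))
  have h_gap : Integrable (fun ω => M ω - M' ω) μ := (hM_mem.sub hM'_mem).integrable le_top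
  have hRh : Integrable (fun ω => R ω * h ω) μ :=
    (h_mem.mul' (r := ∞) (memLp_top_of_eq_zero_or_eq_one hRbin hR)).integrable le_top
  have heh : Integrable (fun ω => e ω * h ω) μ :=
    (h_mem.integrable le_top).bdd_mul (c := 1) (he_meas.mono hm le_rfl).aestronglyMeasurable
      (he_mem.mono fun ω hω => by rw [Real.norm_eq_abs, abs_le]; constructor <;> linarith)
  calc ∫ ω, (R ω * h ω - (M ω - M' ω)) ∂μ
      = ∫ ω, R ω * h ω ∂μ - ∫ ω, (M ω - M' ω) ∂μ := integral_sub hRh h_gap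
    _ = ∫ ω, e ω * h ω ∂μ - ∫ ω, (M ω - M' ω) ∂μ := by
        rw [integral_binary_mul_eq_condExp hm hRbin hR he h_meas.stronglyMeasurable
          (h_mem.integrable le_top)]
    _ = ∫ ω, (e ω * h ω - (M ω - M' ω)) ∂μ := (integral_sub heh h_gap).symm
    _ = ∫ ω, e ω * (1 / π ω - 1 / (e ω / (1 - e ω))) * (M ω - M' ω) ∂μ := by
        refine integral_congr_ae (he_mem.mono fun ω hω => ?_)
        have : e ω ≠ 0 := hω.1.ne'
        simp only [h]
        field_simp
        ring

theorem abs_integral_efficientInfluence_sub_le (hm : m ≤ mΩ) [IsFiniteMeasure μ] (γ : ℝ)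
    {R Z e π M M' : Ω → ℝ} (hRbin : ∀ ω, R ω = 0 ∨ R ω = 1) (hR : Measurable R)
    (he_meas : Measurable[m] e) (he : e =ᵐ[μ] μ[{ω | R ω = 1}.indicator 1 | m])
    (he_mem : ∀ᵐ ω ∂μ, 0 < e ω ∧ e ω < 1)
    (hZ : MemLp Z ∞ μ) (hM : M =ᵐ[μ[|{ω | R ω = 1}]] (μ[|{ω | R ω = 1}])[Z | m])
    (hM_meas : Measurable[m] M) (hM_mem : MemLp M ∞ μ)
    (hM'_meas : Measurable[m] M') (hM'_mem : MemLp M' ∞ μ)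
    (hπ_meas : Measurable[m] (fun ω => 1 / π ω)) (hπ_mem : MemLp (fun ω => 1 / π ω) ∞ μ)
    (hw : MemLp (fun ω => 1 / π ω - 1 / (e ω / (1 - e ω))) 2 μ) :
    |∫ ω, efficientInfluence γ R Z M' π ω ∂μ
        - ∫ ω, efficientInfluence γ R Z M (fun ω => e ω / (1 - e ω)) ω ∂μ|
      ≤ (eLpNorm (fun ω => 1 / π ω - 1 / (e ω / (1 - e ω))) 2 μ).toReal
        * (eLpNorm (fun ω => M ω - M' ω) 2 μ).toReal := by
  rw [integral_efficientInfluence_sub hm γ hRbin hR he_meas he he_mem hZ hM hM_meas hM_mem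
    hM'_meas hM'_mem hπ_meas hπ_mem (hw.integrable one_le_two)]
  set w := fun ω => 1 / π ω - 1 / (e ω / (1 - e ω))
  have h_le : ∀ᵐ ω ∂μ, ‖e ω * w ω‖ ≤ ‖w ω‖ := he_mem.mono fun ω hω => by
    rw [norm_mul]
    exact mul_le_of_le_one_left (norm_nonneg _)
      (by rw [Real.norm_of_nonneg hω.1.le]; exact hω.2.le)
  have hew : MemLp (fun ω => e ω * w ω) 2 μ :=
    hw.of_le ((he_meas.mono hm le_rfl).aestronglyMeasurable.mul hw.1) h_le
  calc |∫ ω, e ω * w ω * (M ω - M' ω) ∂μ|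
      ≤ (eLpNorm (fun ω => e ω * w ω) 2 μ).toReal * (eLpNorm (fun ω => M ω - M' ω) 2 μ).toReal :=
        abs_integral_mul_le_eLpNorm_mul_eLpNorm hew ((hM_mem.sub hM'_mem).mono_exponent le_top)
    _ ≤ (eLpNorm w 2 μ).toReal * (eLpNorm (fun ω => M ω - M' ω) 2 μ).toReal :=
        mul_le_mul_of_nonneg_right (ENNReal.toReal_mono hw.eLpNorm_ne_top (eLpNorm_mono_ae h_le))
          ENNReal.toReal_nonneg

end

theorem stmt_13_general
    {Ω : Type*} [mΩ : MeasurableSpace Ω]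
    (P : Measure Ω) [IsProbabilityMeasure P]
    {k : ℕ} (X : Ω → (Fin k → ℝ)) (Y1 Y0 D R : Ω → ℝ)
    (hX : Measurable X) (hY1 : Measurable Y1) (hY0 : Measurable Y0)
    (hD : Measurable D) (hR : Measurable R)
    (hRbin : ∀ ω, R ω = 0 ∨ R ω = 1)
    -- nonconformity score V_C = v(X, D, Y(1), Y(0))
    (v : (Fin k → ℝ) × ℝ × ℝ × ℝ → ℝ) (hv : Measurable v)
    (V : Ω → ℝ) (hV : V = fun ω => v (X ω, D ω, Y1 ω, Y0 ω))
    (γ : ℝ)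
    -- eR is (a version of) the response propensity P(R = 1 | X, D),
    -- with 0 < P(R = 1 | X, D) < 1 almost surely
    (eR : (Fin k → ℝ) → ℝ → ℝ) (heRmeas : Measurable fun p : (Fin k → ℝ) × ℝ => eR p.1 p.2)
    (heR : (fun ω => eR (X ω) (D ω)) =ᵐ[P]
      MeasureTheory.condExp (MeasurableSpace.comap (fun ω' => (X ω', D ω')) inferInstance) P
        (Set.indicator {ω' | R ω' = 1} (fun _ => (1 : ℝ))))
    (heRbdd : ∀ᵐ ω ∂P, 0 < eR (X ω) (D ω) ∧ eR (X ω) (D ω) < 1)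
    -- mC is (a version of) the true conditional CDF of V_C given (X, D) on the responders
    (mC : ℝ → (Fin k → ℝ) → ℝ → ℝ)
    (hmCmeas : Measurable fun p : ℝ × (Fin k → ℝ) × ℝ => mC p.1 p.2.1 p.2.2)
    (hmCbdd : ∀ η x d, mC η x d ∈ Set.Icc (0 : ℝ) 1)
    (hmC : ∀ η : ℝ, (fun ω => mC η (X ω) (D ω)) =ᵐ[P[|{ω' | R ω' = 1}]]
      MeasureTheory.condExp (MeasurableSpace.comap (fun ω' => (X ω', D ω')) inferInstance)
        (P[|{ω' | R ω' = 1}])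
        (Set.indicator {ω' | V ω' < η} (fun _ => (1 : ℝ))))
    -- m̂ is measurable with values in [0,1]
    (mhat : ℝ → (Fin k → ℝ) → ℝ → ℝ)
    (hmhatmeas : Measurable fun p : ℝ × (Fin k → ℝ) × ℝ => mhat p.1 p.2.1 p.2.2)
    (hmhatbdd : ∀ η x d, mhat η x d ∈ Set.Icc (0 : ℝ) 1)
    -- π̂ is measurable and bounded below by a positive constant
    (πhat : (Fin k → ℝ) → ℝ → ℝ)
    (hπhatmeas : Measurable fun p : (Fin k → ℝ) × ℝ => πhat p.1 p.2)
    (hπhatpos : ∃ c : ℝ, 0 < c ∧ ∀ x d, c ≤ πhat x d)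
    -- square-integrability of the relevant random variables
    (hL2a : MemLp (fun ω => 1 / πhat (X ω) (D ω) -
        1 / (eR (X ω) (D ω) / (1 - eR (X ω) (D ω)))) 2 P) :
    (⨆ η : ℝ,
      |(∫ ω, ((1 - R ω) * (mhat η (X ω) (D ω) - (1 - γ)) +
          (R ω / πhat (X ω) (D ω)) *
            ((if V ω < η then (1 : ℝ) else 0) - mhat η (X ω) (D ω))) ∂P) -
        (∫ ω, ((1 - R ω) * (mC η (X ω) (D ω) - (1 - γ)) +
          (R ω / (eR (X ω) (D ω) / (1 - eR (X ω) (D ω)))) *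
            ((if V ω < η then (1 : ℝ) else 0) - mC η (X ω) (D ω))) ∂P)|) ≤
      (eLpNorm (fun ω => 1 / πhat (X ω) (D ω) -
          1 / (eR (X ω) (D ω) / (1 - eR (X ω) (D ω)))) 2 P).toReal *
        ⨆ η : ℝ, (eLpNorm (fun ω => mC η (X ω) (D ω) - mhat η (X ω) (D ω)) 2 P).toReal := by
  obtain ⟨c, hc, hc_le⟩ := hπhatpos
  have hXD : Measurable[MeasurableSpace.comap (fun ω => (X ω, D ω)) inferInstance]
      fun ω => (X ω, D ω) := comap_measurable _
  have hG : MeasurableSpace.comap (fun ω => (X ω, D ω)) inferInstance ≤ mΩ :=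
    (hX.prodMk hD).comap_le
  have hV_meas : Measurable V := hV ▸ hv.comp (hX.prodMk (hD.prodMk (hY1.prodMk hY0)))
  have h_gap (η : ℝ) :
      (eLpNorm (fun ω => mC η (X ω) (D ω) - mhat η (X ω) (D ω)) 2 P).toReal ≤ 1 :=
    toReal_eLpNorm_le_of_norm_le zero_le_one 2 fun ω =>
      abs_sub_le_of_nonneg_of_le (hmCbdd _ _ _).1 (hmCbdd _ _ _).2 (hmhatbdd _ _ _).1
        (hmhatbdd _ _ _).2
  refine ciSup_le fun η => ?_
  have hZ : {ω | V ω < η}.indicator (fun _ => (1 : ℝ)) = fun ω => if V ω < η then 1 else 0 := by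
    ext ω; simp [Set.indicator_apply]
  have hmC_meas := hmCmeas.comp ((measurable_const (a := η)).prodMk hXD)
  have hmhat_meas := hmhatmeas.comp ((measurable_const (a := η)).prodMk hXD)
  refine (abs_integral_efficientInfluence_sub_le hG γ (e := fun ω => eR (X ω) (D ω))
    (π := fun ω => πhat (X ω) (D ω)) (M := fun ω => mC η (X ω) (D ω))
    (M' := fun ω => mhat η (X ω) (D ω)) hRbin hR (heRmeas.comp hXD) heR heRbdd
    (hZ ▸ (memLp_top_const 1).indicator (measurableSet_lt hV_meas measurable_const))
    (hZ ▸ hmC η) hmC_meas (memLp_top_of_mem_Icc (hmC_meas.mono hG le_rfl).aestronglyMeasurable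
      fun ω => hmCbdd _ _ _)
    hmhat_meas (memLp_top_of_mem_Icc (hmhat_meas.mono hG le_rfl).aestronglyMeasurable
      fun ω => hmhatbdd _ _ _)
    ((hπhatmeas.comp hXD).const_div 1)
    (memLp_top_one_div_of_le (hπhatmeas.comp (hX.prodMk hD)) hc fun ω => hc_le _ _) hL2a).trans ?_
  exact mul_le_mul_of_nonneg_left (le_ciSup ⟨1, Set.forall_mem_range.2 h_gap⟩ η)
    ENNReal.toReal_nonneg

/-- Cauchy–Schwarz bound on the second-order remainder:
`sup_η |E[ψ_C(η; m̂, π̂)] − E[ψ_C(η; m_C, π_R)]|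
  ≤ ‖1/π̂(X,D) − 1/π_R(X,D)‖_{L²(P)} · sup_η ‖m_C(η,X,D) − m̂(η,X,D)‖_{L²(P)}`. -/
theorem stmt_13
    {Ω : Type*} [mΩ : MeasurableSpace Ω] [StandardBorelSpace Ω]
    (P : Measure Ω) [IsProbabilityMeasure P]
    {k : ℕ} (X : Ω → (Fin k → ℝ)) (Y1 Y0 D R : Ω → ℝ)
    (hX : Measurable X) (hY1 : Measurable Y1) (hY0 : Measurable Y0)
    (hD : Measurable D) (hR : Measurable R)
    (hDbin : ∀ ω, D ω = 0 ∨ D ω = 1) (hRbin : ∀ ω, R ω = 0 ∨ R ω = 1)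
    -- nonconformity score V_C = v(X, D, Y(1), Y(0))
    (v : (Fin k → ℝ) × ℝ × ℝ × ℝ → ℝ) (hv : Measurable v)
    (V : Ω → ℝ) (hV : V = fun ω => v (X ω, D ω, Y1 ω, Y0 ω))
    (γ : ℝ) (hγ : γ ∈ Set.Ioo (0 : ℝ) 1)
    (hpos : 0 < P {ω | R ω = 1})
    -- eR is (a version of) the response propensity P(R = 1 | X, D),
    -- with 0 < P(R = 1 | X, D) < 1 almost surely
    (eR : (Fin k → ℝ) → ℝ → ℝ) (heRmeas : Measurable fun p : (Fin k → ℝ) × ℝ => eR p.1 p.2)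
    (heR : (fun ω => eR (X ω) (D ω)) =ᵐ[P]
      MeasureTheory.condExp (MeasurableSpace.comap (fun ω' => (X ω', D ω')) inferInstance) P
        (Set.indicator {ω' | R ω' = 1} (fun _ => (1 : ℝ))))
    (heRbdd : ∀ᵐ ω ∂P, 0 < eR (X ω) (D ω) ∧ eR (X ω) (D ω) < 1)
    -- mC is (a version of) the true conditional CDF of V_C given (X, D) on the responders
    (mC : ℝ → (Fin k → ℝ) → ℝ → ℝ)
    (hmCmeas : Measurable fun p : ℝ × (Fin k → ℝ) × ℝ => mC p.1 p.2.1 p.2.2)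
    (hmCbdd : ∀ η x d, mC η x d ∈ Set.Icc (0 : ℝ) 1)
    (hmC : ∀ η : ℝ, (fun ω => mC η (X ω) (D ω)) =ᵐ[P[|{ω' | R ω' = 1}]]
      MeasureTheory.condExp (MeasurableSpace.comap (fun ω' => (X ω', D ω')) inferInstance)
        (P[|{ω' | R ω' = 1}])
        (Set.indicator {ω' | V ω' < η} (fun _ => (1 : ℝ))))
    -- m̂ is measurable with values in [0,1]
    (mhat : ℝ → (Fin k → ℝ) → ℝ → ℝ)
    (hmhatmeas : Measurable fun p : ℝ × (Fin k → ℝ) × ℝ => mhat p.1 p.2.1 p.2.2)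
    (hmhatbdd : ∀ η x d, mhat η x d ∈ Set.Icc (0 : ℝ) 1)
    -- π̂ is measurable and bounded below by a positive constant
    (πhat : (Fin k → ℝ) → ℝ → ℝ)
    (hπhatmeas : Measurable fun p : (Fin k → ℝ) × ℝ => πhat p.1 p.2)
    (hπhatpos : ∃ c : ℝ, 0 < c ∧ ∀ x d, c ≤ πhat x d)
    -- square-integrability of the relevant random variables
    (hL2a : MemLp (fun ω => 1 / πhat (X ω) (D ω) -
        1 / (eR (X ω) (D ω) / (1 - eR (X ω) (D ω)))) 2 P)
    (hL2b : ∀ η : ℝ, MemLp (fun ω => mC η (X ω) (D ω) - mhat η (X ω) (D ω)) 2 P) :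
    (⨆ η : ℝ,
      |(∫ ω, ((1 - R ω) * (mhat η (X ω) (D ω) - (1 - γ)) +
          (R ω / πhat (X ω) (D ω)) *
            ((if V ω < η then (1 : ℝ) else 0) - mhat η (X ω) (D ω))) ∂P) -
        (∫ ω, ((1 - R ω) * (mC η (X ω) (D ω) - (1 - γ)) +
          (R ω / (eR (X ω) (D ω) / (1 - eR (X ω) (D ω)))) *
            ((if V ω < η then (1 : ℝ) else 0) - mC η (X ω) (D ω))) ∂P)|) ≤
      (eLpNorm (fun ω => 1 / πhat (X ω) (D ω) -
          1 / (eR (X ω) (D ω) / (1 - eR (X ω) (D ω)))) 2 P).toReal *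
        ⨆ η : ℝ, (eLpNorm (fun ω => mC η (X ω) (D ω) - mhat η (X ω) (D ω)) 2 P).toReal :=
  stmt_13_general (mΩ := mΩ) P X Y1 Y0 D R hX hY1 hY0 hD hR hRbin v hv V hV γ eR heRmeas heR heRbdd
    mC hmCmeas hmCbdd hmC mhat hmhatmeas hmhatbdd πhat hπhatmeas hπhatpos hL2a
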